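/- Let Γ be a group generated by a finite symmetric subset W with 1 ∈ W, and let Γ' ≤ Γ be a finite-index subgroup generated by a finite symmetric subset W' with 1 ∈ W'. Let π be a unitary representation of Γ on a complex Hilbert space H (Γ discrete) and let b : Γ → H be a 1-cocycle over π. If the restriction b|_{Γ'} has sublinear growth with respect to the word length |·|_{W'} on Γ', then b has sublinear growth with respect to the word length |·|_W on Γ. -/

import Mathlib

open scoped Pointwise

/-!
Write `g = r(g) * γ(g)`, where `r(g)` is the chosen representative of the coset `gΓ'` and
`γ(g) ∈ Γ'`. Rewriting a word `w₁ ⋯ wₙ` in `W` from the right, Schreier-style, shows that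
`|γ(g)|_{W'} ≤ M |g|_W + M₀`, with `M` bounding the `W'`-lengths of the finitely many
`γ(w * r)` for `w ∈ W` and `r` a coset representative. Since `π` is unitary, the cocycle identity
gives `‖b g‖ ≤ ‖b (r g)‖ + ‖b (γ g)‖`, where the first term takes finitely many values.
Finally, as balls of a finitely generated group are finite, sublinear growth amounts to
`‖b g‖ ≤ ε |g| + C_ε` for every `ε > 0`, and this bound transfers from `Γ'` to `Γ`.
-/

/-- The word length of `g` with respect to a generating set `Q` (symmetric, containing `1`):
the least `n` such that `g` is a product of `n` elements of `Q`. -/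
noncomputable def wordLength {G : Type*} [Group G] (Q : Set G) (g : G) : ℕ :=
  sInf {n : ℕ | g ∈ Q ^ n}

/-- A map `b : G → H` into a normed space has sublinear growth with respect to the word
length `|·|_Q` if for every `ε > 0` there is `N` with `‖b g‖ < ε * |g|_Q` whenever `|g|_Q > N`. -/
def HasSublinearGrowth {G : Type*} [Group G] {H : Type*} [NormedAddCommGroup H]
    (Q : Set G) (b : G → H) : Prop :=
  ∀ ε : ℝ, 0 < ε → ∃ N : ℕ, ∀ g : G, N < wordLength Q g →
    ‖b g‖ < ε * (wordLength Q g : ℝ)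

section WordLength

variable {G : Type*} [Group G] {Q : Set G}

lemma exists_mem_pow_of_closure_eq_top (hsymm : Q⁻¹ = Q) (hgen : Subgroup.closure Q = ⊤)
    (g : G) : ∃ n, g ∈ Q ^ n := by
  induction hgen ▸ Subgroup.mem_top g using Subgroup.closure_induction with
  | mem x hx => exact ⟨1, by simpa using hx⟩
  | one => exact ⟨0, by simp⟩
  | mul x y _ _ hx hy =>
    obtain ⟨m, hm⟩ := hx
    obtain ⟨n, hn⟩ := hy
    exact ⟨m + n, pow_add Q m n ▸ Set.mul_mem_mul hm hn⟩
  | inv x _ hx =>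
    obtain ⟨n, hn⟩ := hx
    exact ⟨n, by rw [← hsymm, inv_pow]; exact Set.inv_mem_inv.mpr hn⟩

lemma mem_pow_wordLength (hsymm : Q⁻¹ = Q) (hgen : Subgroup.closure Q = ⊤) (g : G) :
    g ∈ Q ^ wordLength Q g :=
  Nat.sInf_mem (exists_mem_pow_of_closure_eq_top hsymm hgen g)

lemma wordLength_le_of_mem_pow {g : G} {n : ℕ} (h : g ∈ Q ^ n) : wordLength Q g ≤ n :=
  Nat.sInf_le h

lemma wordLength_mul_le (hsymm : Q⁻¹ = Q) (hgen : Subgroup.closure Q = ⊤) (g h : G) :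
    wordLength Q (g * h) ≤ wordLength Q g + wordLength Q h :=
  wordLength_le_of_mem_pow <| pow_add Q _ _ ▸
    Set.mul_mem_mul (mem_pow_wordLength hsymm hgen g) (mem_pow_wordLength hsymm hgen h)

lemma finite_setOf_wordLength_le (hfin : Q.Finite) (hsymm : Q⁻¹ = Q)
    (hgen : Subgroup.closure Q = ⊤) (N : ℕ) : {g | wordLength Q g ≤ N}.Finite := by
  classical
  refine (Set.finite_le_nat N).biUnion (t := (Q ^ ·)) (fun n _ => ?_) |>.subset fun g hg =>
    Set.mem_biUnion hg (mem_pow_wordLength hsymm hgen g)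
  simpa only [Finset.coe_pow, Set.Finite.coe_toFinset] using (hfin.toFinset ^ n).finite_toSet

end WordLength

section SublinearGrowth

variable {G : Type*} [Group G] {E : Type*} [NormedAddCommGroup E] {Q : Set G} {b : G → E}

lemma hasSublinearGrowth_of_forall_exists_norm_le
    (h : ∀ ε : ℝ, 0 < ε → ∃ C : ℝ, ∀ g, ‖b g‖ ≤ ε * wordLength Q g + C) :
    HasSublinearGrowth Q b := by
  intro ε hε
  obtain ⟨C, hC⟩ := h (ε / 2) (half_pos hε)
  refine ⟨⌈2 * C / ε⌉₊, fun g hg => ?_⟩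
  have hCg := Nat.lt_of_ceil_lt hg
  rw [div_lt_iff₀ hε] at hCg
  linarith [hC g]

lemma HasSublinearGrowth.exists_norm_le (hb : HasSublinearGrowth Q b) (hfin : Q.Finite)
    (hsymm : Q⁻¹ = Q) (hgen : Subgroup.closure Q = ⊤) {ε : ℝ} (hε : 0 < ε) :
    ∃ C : ℝ, ∀ g, ‖b g‖ ≤ ε * wordLength Q g + C := by
  obtain ⟨N, hN⟩ := hb ε hε
  obtain ⟨C, hC⟩ := ((finite_setOf_wordLength_le hfin hsymm hgen N).image (‖b ·‖)).bddAbove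
  refine ⟨max C 0, fun g => ?_⟩
  rcases le_or_gt (wordLength Q g) N with hg | hg
  · have hbounded := hC ⟨g, hg, rfl⟩
    have hnonneg : 0 ≤ ε * wordLength Q g := by positivity
    linarith [le_max_left C 0]
  · linarith [hN g hg, le_max_right C 0]

end SublinearGrowth

lemma norm_cocycle_mul_le {G R E : Type*} [Mul G] [Semiring R] [SeminormedAddCommGroup E]
    [Module R E] (π : G → E ≃ₗᵢ[R] E) {b : G → E} (hb : ∀ g h, b (g * h) = b g + π g (b h))
    (g h : G) : ‖b (g * h)‖ ≤ ‖b g‖ + ‖b h‖ := by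
  simpa only [hb, LinearIsometryEquiv.norm_map] using norm_add_le (b g) (π g (b h))

namespace Subgroup

variable {G : Type*} [Group G] (K : Subgroup G)

noncomputable def cosetCorrection (g : G) : K :=
  ⟨(g : G ⧸ K).out⁻¹ * g, QuotientGroup.leftRel_apply.mp (Quotient.mk_out g)⟩

@[simp]
lemma out_mul_cosetCorrection (g : G) : (g : G ⧸ K).out * K.cosetCorrection g = g :=
  mul_inv_cancel_left _ g

lemma cosetCorrection_mul (w g : G) :
    K.cosetCorrection (w * g) =
      K.cosetCorrection (w * (g : G ⧸ K).out) * K.cosetCorrection g := by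
  have hcoset : ((w * g : G) : G ⧸ K) = ((w * (g : G ⧸ K).out : G) : G ⧸ K) :=
    (MulAction.Quotient.mk_smul_out K w (g : G ⧸ K)).symm
  ext
  simp only [cosetCorrection, Subgroup.coe_mul, hcoset]
  group

end Subgroup

section Schreier

variable {G : Type*} [Group G] {K : Subgroup G} {W : Set G} {W' : Set K}

lemma exists_wordLength_cosetCorrection_le [K.FiniteIndex] (hWfin : W.Finite)
    (hWsymm : W⁻¹ = W) (hWgen : Subgroup.closure W = ⊤) (hW'symm : W'⁻¹ = W')
    (hW'gen : Subgroup.closure W' = ⊤) :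
    ∃ M : ℕ, ∀ g, wordLength W' (K.cosetCorrection g) ≤
      M * wordLength W g + wordLength W' (K.cosetCorrection 1) := by
  obtain ⟨M, hM⟩ := ((hWfin.prod (Set.finite_univ (α := G ⧸ K))).image
    fun p => wordLength W' (K.cosetCorrection (p.1 * p.2.out))).bddAbove
  have hstep : ∀ n, ∀ g ∈ W ^ n, wordLength W' (K.cosetCorrection g) ≤
      M * n + wordLength W' (K.cosetCorrection 1) := by
    intro n
    induction n with
    | zero => simp
    | succ n ih =>
      intro _ hmem
      obtain ⟨w, hw, g, hg, rfl⟩ := pow_succ' W n ▸ hmem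
      calc wordLength W' (K.cosetCorrection (w * g))
          ≤ wordLength W' (K.cosetCorrection (w * (g : G ⧸ K).out)) +
              wordLength W' (K.cosetCorrection g) := by
            rw [K.cosetCorrection_mul]; exact wordLength_mul_le hW'symm hW'gen _ _
        _ ≤ M + (M * n + wordLength W' (K.cosetCorrection 1)) :=
            add_le_add (hM ⟨(w, g), ⟨hw, trivial⟩, rfl⟩) (ih g hg)
        _ = M * (n + 1) + wordLength W' (K.cosetCorrection 1) := by ring
  exact ⟨M, fun g => hstep _ g (mem_pow_wordLength hWsymm hWgen g)⟩

end Schreier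

theorem sublinearGrowth_of_finiteIndex_restriction_general
    {Γ : Type*} [Group Γ]
    (W : Set Γ) (hWfin : W.Finite) (hWsymm : W⁻¹ = W)
    (hWgen : Subgroup.closure W = ⊤)
    (Γ' : Subgroup Γ) (hΓ'fi : Γ'.FiniteIndex)
    (W' : Set Γ') (hW'fin : W'.Finite) (hW'symm : W'⁻¹ = W')
    (hW'gen : Subgroup.closure W' = ⊤)
    {H : Type*} [NormedAddCommGroup H] [InnerProductSpace ℂ H]
    (π : Γ →* (H ≃ₗᵢ[ℂ] H)) (b : Γ → H)
    (hbcoc : ∀ g h : Γ, b (g * h) = b g + π g (b h))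
    (hsub' : HasSublinearGrowth W' (fun γ : Γ' => b ↑γ)) :
    HasSublinearGrowth W b := by
  refine hasSublinearGrowth_of_forall_exists_norm_le fun ε hε => ?_
  obtain ⟨M, hM⟩ := exists_wordLength_cosetCorrection_le hWfin hWsymm hWgen hW'symm hW'gen
  set M₀ := wordLength W' (Γ'.cosetCorrection 1)
  set δ := ε / (M + 1)
  have hδ : 0 < δ := by positivity
  have hδM : δ * M ≤ ε := by
    rw [div_mul_eq_mul_div, div_le_iff₀ (by positivity)]
    nlinarith
  obtain ⟨C', hC'⟩ := hsub'.exists_norm_le hW'fin hW'symm hW'gen hδ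
  obtain ⟨C, hC⟩ := (Set.finite_range fun q : Γ ⧸ Γ' => ‖b q.out‖).bddAbove
  refine ⟨C + δ * M₀ + C', fun g => ?_⟩
  calc ‖b g‖ = ‖b ((g : Γ ⧸ Γ').out * Γ'.cosetCorrection g)‖ := by
        rw [Subgroup.out_mul_cosetCorrection]
    _ ≤ ‖b (g : Γ ⧸ Γ').out‖ + ‖b (Γ'.cosetCorrection g)‖ := norm_cocycle_mul_le π hbcoc _ _
    _ ≤ C + (δ * wordLength W' (Γ'.cosetCorrection g) + C') :=
        add_le_add (hC ⟨_, rfl⟩) (hC' _)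
    _ ≤ C + (δ * (M * wordLength W g + M₀) + C') := by gcongr; exact_mod_cast hM g
    _ ≤ ε * wordLength W g + (C + δ * M₀ + C') := by
        linarith [mul_le_mul_of_nonneg_right hδM (Nat.cast_nonneg (wordLength W g))]

/-- If the restriction of a 1-cocycle `b` over a unitary representation of a finitely
generated group `Γ` to a finite-index subgroup `Γ'` has sublinear growth (with respect to a
finite symmetric generating set `W'` of `Γ'`), then `b` has sublinear growth with respect to
a finite symmetric generating set `W` of `Γ`. -/
theorem sublinearGrowth_of_finiteIndex_restriction
    {Γ : Type*} [Group Γ]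
    (W : Set Γ) (hWfin : W.Finite) (hWsymm : W⁻¹ = W) (hWone : (1 : Γ) ∈ W)
    (hWgen : Subgroup.closure W = ⊤)
    (Γ' : Subgroup Γ) (hΓ'fi : Γ'.FiniteIndex)
    (W' : Set Γ') (hW'fin : W'.Finite) (hW'symm : W'⁻¹ = W') (hW'one : (1 : Γ') ∈ W')
    (hW'gen : Subgroup.closure W' = ⊤)
    {H : Type*} [NormedAddCommGroup H] [InnerProductSpace ℂ H] [CompleteSpace H]
    (π : Γ →* (H ≃ₗᵢ[ℂ] H)) (b : Γ → H)
    (hbcoc : ∀ g h : Γ, b (g * h) = b g + π g (b h))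
    (hsub' : HasSublinearGrowth W' (fun γ : Γ' => b ↑γ)) :
    HasSublinearGrowth W b :=
  sublinearGrowth_of_finiteIndex_restriction_general W hWfin hWsymm hWgen Γ' hΓ'fi W' hW'fin hW'symm
    hW'gen π b hbcoc hsub'
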